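/- arXiv:1103.3584 — 2 statements merged into one kernel-verified Lean document; each statement's English description precedes it below -/
import Mathlib

section
/- For k ≥ 3, HS(2k,k) is not a Cayley graph: Aut(HS(2k,k)) contains no subgroup acting regularly on the vertex set. -/
abbrev hsVert (n k : ℕ) : Type := {v : Finset ℕ // v ⊆ Finset.Icc 1 n ∧ v.card = k}

/-- The hyper-star graph `HS(n,k)` on the `k`-subsets of `X = {1,...,n}`:
`v, w` are adjacent iff `|v ∩ w| = k-1` and exactly one of `v, w` contains `1`. -/
def HS (n k : ℕ) : SimpleGraph (hsVert n k) :=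
  SimpleGraph.fromRel (fun v w =>
    (v.1 ∩ w.1).card = k - 1 ∧ 1 ∈ v.1 ∧ 1 ∉ w.1)

def graphAut {V : Type*} (Γ : SimpleGraph V) : Subgroup (Equiv.Perm V) where
  carrier := {e | ∀ a b, Γ.Adj (e a) (e b) ↔ Γ.Adj a b}
  one_mem' := by intro a b; simp
  mul_mem' := by
    intro e f he hf a b
    simp only [Equiv.Perm.mul_apply]
    rw [he, hf]
  inv_mem' := by
    intro e he a b
    have h := he (e⁻¹ a) (e⁻¹ b)
    simpa using h.symm

/-!
Put `Y = {2, …, 2k}`, a set of `2k - 1` points. A vertex avoiding `1` is a `k`-subset of `Y`, a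
vertex containing `1` is `{1} ∪ S` for a `(k - 1)`-subset `S` of `Y`, and adjacency is `S ⊆ t`:
`HS(2k, k)` is the inclusion graph between the two middle layers of the subsets of `Y`. It is
connected, so an automorphism preserves or swaps the two layers, and one preserving them is induced
by a permutation of `Y`: for `y ∈ t`, the point of the image of `t` missing from the image of
`t \ {y}` depends only on `y`. A regular subgroup `R` therefore yields a group `H` of permutations
of `Y` acting regularly on the `k`-subsets, hence transitively on their complements, the
`(k - 1)`-subsets.

Every involution of `Y` fixes a `k`-set, so no element of `H` swaps two points, and choosing one
of the `H`-orbits of `(a, b)` and `(b, a)` for every pair orients `Y` into an `H`-invariant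
tournament. Its number of cyclic triangles inside a `k`-set, and inside a `(k - 1)`-set, is then
constant, and for `3 ≤ k` this forces all triangles to be cyclic or none. The first is impossible
on four points; in the second case the tournament is a linear order preserved by `H`, so `H` is
trivial, contradicting transitivity.
-/

open Finset Equiv

namespace Finset

variable {α : Type*} [DecidableEq α]

theorem induction_on_exchange {P : Finset α → Prop} {s t : Finset α} (hst : #s = #t) (hs : P s)
    (step : ∀ u a b, a ∈ u → a ∉ t → b ∉ u → b ∈ t → P u → P (insert b (u.erase a))) :
    P t := by
  induction hn : #(t \ s) generalizing s with
  | zero =>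
    have hts : t ⊆ s := sdiff_eq_empty_iff_subset.mp (card_eq_zero.mp hn)
    rwa [eq_of_subset_of_card_le hts hst.le]
  | succ n ih =>
    obtain ⟨b, hb⟩ : (t \ s).Nonempty := card_pos.mp (by omega)
    obtain ⟨a, ha⟩ : (s \ t).Nonempty := card_pos.mp (by rw [card_sdiff_comm hst]; omega)
    rw [mem_sdiff] at ha hb
    have hb' : b ∉ s.erase a := fun h => hb.2 (mem_of_mem_erase h)
    have hcard : #(insert b (s.erase a)) = #t := by
      rw [card_insert_of_notMem hb', card_erase_add_one ha.1, hst]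
    have hdiff : t \ insert b (s.erase a) = (t \ s).erase b := by
      ext x
      simp only [mem_sdiff, mem_insert, mem_erase]
      constructor
      · rintro ⟨hxt, hx⟩
        exact ⟨fun h => hx (.inl h), hxt, fun h => hx (.inr ⟨fun hxa => ha.2 (hxa ▸ hxt), h⟩)⟩
      · rintro ⟨hxb, hxt, hxs⟩
        exact ⟨hxt, by tauto⟩
    exact ih hcard (step s a b ha.1 ha.2 hb.2 hb.1 hs)
      (by rw [hdiff, card_erase_of_mem (mem_sdiff.mpr hb), hn, Nat.add_sub_cancel])

theorem sum_powersetCard_succ_insert {M : Type*} [AddCommMonoid M] {a : α} {s : Finset α}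
    (ha : a ∉ s) (n : ℕ) (f : Finset α → M) :
    ∑ t ∈ (insert a s).powersetCard (n + 1), f t =
      ∑ t ∈ s.powersetCard (n + 1), f t + ∑ t ∈ s.powersetCard n, f (insert a t) := by
  rw [powersetCard_succ_insert ha, sum_union, sum_image]
  · exact insert_erase_invOn.2.injOn.mono fun t ht ↦ notMem_mono (mem_powersetCard.1 ht).1 ha
  · aesop (add simp [disjoint_left, insert_subset_iff, mem_powersetCard])

theorem eq_zero_of_sum_subset_card_eq_zero {g : α → ℤ} {W : Finset α} {p : ℕ} (hp : 0 < p)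
    (hpW : p < #W) (h : ∀ P ⊆ W, #P = p → ∑ x ∈ P, g x = 0) : ∀ x ∈ W, g x = 0 := by
  have hconst : ∀ x ∈ W, ∀ z ∈ W, g z = g x := by
    intro x hx z hz
    obtain rfl | hzx := eq_or_ne z x
    · rfl
    obtain ⟨P, hPW, hPc⟩ := exists_subset_card_eq (s := (W.erase x).erase z) (n := p - 1)
      (by rw [card_erase_of_mem (mem_erase.mpr ⟨hzx, hz⟩), card_erase_of_mem hx]; omega)
    have hsum : ∀ y ∈ W, y ∉ P → g y + ∑ x ∈ P, g x = 0 := fun y hy hyP => by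
      rw [← sum_insert hyP]
      refine h _ (insert_subset hy fun w hw => ?_) (by rw [card_insert_of_notMem hyP]; omega)
      exact mem_of_mem_erase (mem_of_mem_erase (hPW hw))
    linarith [hsum z hz fun h => by simpa using hPW h, hsum x hx fun h => by simpa using hPW h]
  intro x hx
  obtain ⟨P, hxP, hPW, hPc⟩ := exists_subsuperset_card_eq (singleton_subset_iff.mpr hx)
    (by rw [card_singleton]; omega) hpW.le
  have := h P hPW hPc
  rw [sum_congr rfl fun z hz => hconst x hx z (hPW hz), sum_const, hPc, nsmul_eq_mul] at this
  exact (mul_eq_zero.mp this).resolve_left (by exact_mod_cast hp.ne')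

variable {f : Finset α → ℤ} {j : ℕ}

theorem sum_triple_eq_of_sum_powersetCard_three
    (h : ∀ s t : Finset α, #s = #t → (#s = j ∨ #s = j + 1) →
      ∑ u ∈ s.powersetCard 3, f u = ∑ u ∈ t.powersetCard 3, f u)
    {u a b : α} {P : Finset α} (hP : #P + 1 = j) (hu : u ∉ P) (ha : a ∉ P) (hb : b ∉ P)
    (hau : a ≠ u) (hbu : b ≠ u) :
    ∑ x ∈ P, f {u, a, x} = ∑ x ∈ P, f {u, b, x} := by
  have split : ∀ c ∉ P, c ≠ u →
      ∑ t ∈ (insert u (insert c P)).powersetCard 3, f t =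
        ∑ t ∈ (insert c P).powersetCard 3, f t + ∑ t ∈ P.powersetCard 2, f (insert u t) +
          ∑ x ∈ P, f {u, c, x} := by
    intro c hc hcu
    rw [sum_powersetCard_succ_insert (by simp [hcu.symm, hu]) 2,
      sum_powersetCard_succ_insert hc 1, powersetCard_one, sum_map, add_assoc]
    rfl
  have hcard : ∀ c ∉ P, #(insert c P) = j := fun c hc => by
    rw [card_insert_of_notMem hc, hP]
  have hcard' : ∀ c ∉ P, c ≠ u → #(insert u (insert c P)) = j + 1 := fun c hc hcu => by
    rw [card_insert_of_notMem (by simp [hcu.symm, hu]), hcard c hc]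
  have hlow := h (insert a P) (insert b P) (by rw [hcard a ha, hcard b hb]) (.inl (hcard a ha))
  have hup := h (insert u (insert a P)) (insert u (insert b P))
    (by rw [hcard' a ha hau, hcard' b hb hbu]) (.inr (hcard' a ha hau))
  rw [split a ha hau, split b hb hbu] at hup
  linarith

theorem triple_eq_of_sum_powersetCard_three [Fintype α] (hj : 2 ≤ j)
    (hjα : j + 3 ≤ Fintype.card α)
    (h : ∀ s t : Finset α, #s = #t → (#s = j ∨ #s = j + 1) →
      ∑ u ∈ s.powersetCard 3, f u = ∑ u ∈ t.powersetCard 3, f u)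
    {u a b x : α} (hau : a ≠ u) (hbu : b ≠ u) (hab : a ≠ b) (hxu : x ≠ u) (hxa : x ≠ a)
    (hxb : x ≠ b) : f {u, a, x} = f {u, b, x} := by
  have hW : #(univ \ {u, a, b}) = Fintype.card α - 3 := by
    rw [card_sdiff_of_subset (subset_univ _), card_univ,
      card_eq_three.mpr ⟨u, a, b, hau.symm, hbu.symm, hab, rfl⟩]
  have := eq_zero_of_sum_subset_card_eq_zero (g := fun y => f {u, a, y} - f {u, b, y})
    (W := univ \ {u, a, b}) (p := j - 1) (by omega) (by omega) (fun P hPW hPc => by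
      have hnot : ∀ c ∈ ({u, a, b} : Finset α), c ∉ P := fun c hc hcP => by
        simpa [hc] using hPW hcP
      rw [sum_sub_distrib, sum_triple_eq_of_sum_powersetCard_three h (by omega)
        (hnot u (by simp)) (hnot a (by simp)) (hnot b (by simp)) hau hbu, sub_self])
    x (by simp [hxu, hxa, hxb])
  exact sub_eq_zero.mp this

theorem eq_of_sum_powersetCard_three [Fintype α] (hj : 2 ≤ j)
    (hjα : j + 3 ≤ Fintype.card α)
    (h : ∀ s t : Finset α, #s = #t → (#s = j ∨ #s = j + 1) →
      ∑ u ∈ s.powersetCard 3, f u = ∑ u ∈ t.powersetCard 3, f u)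
    {t t' : Finset α} (ht : #t = 3) (ht' : #t' = 3) : f t = f t' := by
  refine (induction_on_exchange (P := fun s => #s = 3 ∧ f s = f t) (ht.trans ht'.symm)
    ⟨ht, rfl⟩ ?_).2.symm
  rintro s c d hcs - hds - ⟨hs, hfs⟩
  obtain ⟨u, x, hux, hsc⟩ := card_eq_two.mp (by rw [card_erase_of_mem hcs, hs] : #(s.erase c) = 2)
  have hu : u ∈ s.erase c := by simp [hsc]
  have hx : x ∈ s.erase c := by simp [hsc]
  have hs_eq : s = {u, c, x} := by rw [← insert_erase hcs, hsc, insert_comm]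
  refine ⟨by rw [card_insert_of_notMem fun h => hds (mem_of_mem_erase h), card_erase_of_mem hcs,
    hs], ?_⟩
  rw [← hfs, hsc, hs_eq, insert_comm]
  simp only [mem_erase] at hu hx
  have hd : ∀ y ∈ s, d ≠ y := fun y hy h => hds (h ▸ hy)
  exact (triple_eq_of_sum_powersetCard_three hj hjα h (Ne.symm hu.1) (hd u hu.2)
    (hd c hcs).symm (Ne.symm hux) hx.1 (hd x hx.2).symm).symm

end Finset

section LayerMap

variable {α : Type*} [DecidableEq α]

structure IsLayerMap (k : ℕ) (φ ψ : Finset α → Finset α) : Prop where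
  card_up : ∀ t, #t = k → #(φ t) = k
  card_down : ∀ S, #S + 1 = k → #(ψ S) + 1 = k
  inj_up : ∀ t t', #t = k → #t' = k → φ t = φ t' → t = t'
  inj_down : ∀ S S', #S + 1 = k → #S' + 1 = k → ψ S = ψ S' → S = S'
  mono : ∀ S t, #S + 1 = k → #t = k → S ⊆ t → ψ S ⊆ φ t

def IsImagePoint (φ ψ : Finset α → Finset α) (t : Finset α) (y z : α) : Prop :=
  φ t \ ψ (t.erase y) = {z}

variable {k : ℕ} {φ ψ : Finset α → Finset α} {t : Finset α} {y z : α}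

theorem IsImagePoint.mem (hz : IsImagePoint φ ψ t y z) : z ∈ φ t :=
  (mem_sdiff.mp (hz ▸ mem_singleton_self z : z ∈ φ t \ ψ (t.erase y))).1

theorem IsImagePoint.notMem (hz : IsImagePoint φ ψ t y z) : z ∉ ψ (t.erase y) :=
  (mem_sdiff.mp (hz ▸ mem_singleton_self z : z ∈ φ t \ ψ (t.erase y))).2

namespace IsLayerMap

theorem mono_erase (h : IsLayerMap k φ ψ) (ht : #t = k) (hy : y ∈ t) :
    ψ (t.erase y) ⊆ φ t :=
  h.mono _ _ (by rw [card_erase_add_one hy, ht]) ht (erase_subset y t)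

theorem exists_isImagePoint (h : IsLayerMap k φ ψ) (ht : #t = k) (hy : y ∈ t) :
    ∃ z, IsImagePoint φ ψ t y z := by
  have := h.card_down (t.erase y) (by rw [card_erase_add_one hy, ht])
  exact card_eq_one.mp (by rw [card_sdiff_of_subset (h.mono_erase ht hy), h.card_up t ht]; omega)

theorem eq_insert_of_isImagePoint (h : IsLayerMap k φ ψ) (ht : #t = k) (hy : y ∈ t)
    (hz : IsImagePoint φ ψ t y z) : φ t = insert z (ψ (t.erase y)) := by
  rw [insert_eq, ← hz, sdiff_union_of_subset (h.mono_erase ht hy)]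

theorem eq_of_isImagePoint (h : IsLayerMap k φ ψ) (ht : #t = k) {y y' : α} (hy : y ∈ t)
    (hy' : y' ∈ t) (hz : IsImagePoint φ ψ t y z) (hz' : IsImagePoint φ ψ t y' z) : y = y' := by
  have hψ : ψ (t.erase y) = ψ (t.erase y') := by
    rw [← erase_insert hz.notMem, ← h.eq_insert_of_isImagePoint ht hy hz,
      h.eq_insert_of_isImagePoint ht hy' hz', erase_insert hz'.notMem]
  exact (erase_inj t hy).mp (h.inj_down _ _ (by rw [card_erase_add_one hy, ht])
    (by rw [card_erase_add_one hy', ht]) hψ)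

theorem mem_of_isImagePoint (h : IsLayerMap k φ ψ) (ht : #t = k) {C : Finset α}
    (hC : #C + 1 = k) (hCt : C ⊆ t) (hyC : y ∈ C) (hz : IsImagePoint φ ψ t y z) : z ∈ ψ C := by
  by_contra hzC
  have hy := hCt hyC
  have hsub : ψ C ⊆ ψ (t.erase y) := fun x hx => by
    have hx' := h.mono C t hC ht hCt hx
    rw [h.eq_insert_of_isImagePoint ht hy hz] at hx'
    exact (mem_insert.mp hx').resolve_left fun hxz => hzC (hxz ▸ hx)
  have hdown : #(t.erase y) + 1 = k := by rw [card_erase_add_one hy, ht]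
  have := h.inj_down _ _ hC hdown (eq_of_subset_of_card_le hsub (by
    have := h.card_down _ hdown; have := h.card_down _ hC; omega))
  exact notMem_erase y t (this ▸ hyC)

theorem subset_of_isImagePoint_ne (h : IsLayerMap k φ ψ) {u u' C T : Finset α} {w w' : α}
    (hu : #u = k) (hu' : #u' = k) (hC : #C + 1 = k) (hT : #T = k) (hCu : C ⊆ u)
    (hCu' : C ⊆ u') (hyC : y ∈ C) (huT : u.erase y ⊆ T) (hu'T : u'.erase y ⊆ T)
    (hw : IsImagePoint φ ψ u y w) (hw' : IsImagePoint φ ψ u' y w') (hne : w ≠ w') :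
    φ u ⊆ φ T := by
  have hdown : ∀ {v : Finset α}, #v = k → y ∈ v → #(v.erase y) + 1 = k := fun hv hy => by
    rw [card_erase_add_one hy, hv]
  have hwT : w ∈ φ T := by
    have hwu' := h.mono C u' hC hu' hCu' (h.mem_of_isImagePoint hu hC hCu hyC hw)
    rw [h.eq_insert_of_isImagePoint hu' (hCu' hyC) hw'] at hwu'
    exact h.mono _ T (hdown hu' (hCu' hyC)) hT hu'T ((mem_insert.mp hwu').resolve_left hne)
  rw [h.eq_insert_of_isImagePoint hu (hCu hyC) hw]
  exact insert_subset hwT (h.mono _ T (hdown hu (hCu hyC)) hT huT)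

theorem isImagePoint_exchange (h : IsLayerMap k φ ψ) (ht : #t = k) {a b : α} (ha : a ∈ t)
    (hb : b ∉ t) (hy : y ∈ t) (hay : a ≠ y) (hz : IsImagePoint φ ψ t y z) :
    IsImagePoint φ ψ (insert b (t.erase a)) y z := by
  have hbe : ∀ x, b ∉ t.erase x := fun x hbx => hb (mem_of_mem_erase hbx)
  have ht' : #(insert b (t.erase a)) = k := by
    rw [card_insert_of_notMem (hbe a), card_erase_add_one ha, ht]
  have hT : #(insert b (t.erase y)) = k := by
    rw [card_insert_of_notMem (hbe y), card_erase_add_one hy, ht]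
  have hC : #(t.erase a) + 1 = k := by rw [card_erase_add_one ha, ht]
  have hyC : y ∈ t.erase a := mem_erase.mpr ⟨hay.symm, hy⟩
  have hCt' : t.erase a ⊆ insert b (t.erase a) := subset_insert _ _
  have htT : t.erase y ⊆ insert b (t.erase y) := subset_insert _ _
  have ht'T : (insert b (t.erase a)).erase y ⊆ insert b (t.erase y) := by
    rw [erase_insert_of_ne fun hby : b = y => hb (hby ▸ hy)]
    exact insert_subset_insert b (erase_subset_erase y (erase_subset a t))
  obtain ⟨z', hz'⟩ := h.exists_isImagePoint ht' (hCt' hyC)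
  obtain rfl | hne := eq_or_ne z z'
  · exact hz'
  -- Otherwise `φ t = φ (insert b (t.erase y)) = φ (insert b (t.erase a))`.
  have h₁ := h.subset_of_isImagePoint_ne ht ht' hC hT (erase_subset a t) hCt' hyC htT ht'T hz hz'
    hne
  have h₂ := h.subset_of_isImagePoint_ne ht' ht hC hT hCt' (erase_subset a t) hyC ht'T htT hz' hz
    hne.symm
  have hφ : φ t = φ (insert b (t.erase a)) := by
    rw [eq_of_subset_of_card_le h₁ (by rw [h.card_up _ hT, h.card_up _ ht]),
      eq_of_subset_of_card_le h₂ (by rw [h.card_up _ hT, h.card_up _ ht'])]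
  exact absurd (h.inj_up _ _ ht ht' hφ ▸ mem_insert_self b _) hb

theorem isImagePoint_of_mem (h : IsLayerMap k φ ψ) (ht : #t = k) (hy : y ∈ t)
    (hz : IsImagePoint φ ψ t y z) {t' : Finset α} (ht' : #t' = k) (hy' : y ∈ t') :
    IsImagePoint φ ψ t' y z := by
  refine (induction_on_exchange (P := fun u => #u = k ∧ y ∈ u ∧ IsImagePoint φ ψ u y z)
    (ht.trans ht'.symm) ⟨ht, hy, hz⟩ ?_).2.2
  rintro u a b hau hat' hbu - ⟨hu, hyu, hzu⟩
  have hay : a ≠ y := fun hay => hat' (hay ▸ hy')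
  refine ⟨?_, mem_insert_of_mem (mem_erase.mpr ⟨hay.symm, hyu⟩),
    h.isImagePoint_exchange hu hau hbu hyu hay hzu⟩
  rw [card_insert_of_notMem fun h => hbu (mem_of_mem_erase h), card_erase_add_one hau, hu]

theorem exists_perm_image_eq [Fintype α] (h : IsLayerMap k φ ψ) (hk : 2 ≤ k)
    (hkα : k ≤ Fintype.card α) : ∃ σ : Perm α, ∀ t, #t = k → φ t = t.image σ := by
  have hpt : ∀ y, ∃ z, ∀ t, #t = k → y ∈ t → IsImagePoint φ ψ t y z := fun y => by
    obtain ⟨t₀, hyt₀, -, ht₀⟩ := exists_subsuperset_card_eq (n := k)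
      (singleton_subset_iff.mpr (mem_univ y)) (by rw [card_singleton]; omega)
      (by rw [card_univ]; omega)
    have hy₀ := hyt₀ (mem_singleton_self y)
    obtain ⟨z, hz⟩ := h.exists_isImagePoint ht₀ hy₀
    exact ⟨z, fun t ht hy => h.isImagePoint_of_mem ht₀ hy₀ hz ht hy⟩
  choose ρ hρ using hpt
  have hinj : Function.Injective ρ := fun y y' hyy => by
    obtain ⟨t, hyt, -, ht⟩ := exists_subsuperset_card_eq (subset_univ {y, y'})
      (card_le_two.trans hk) (by rw [card_univ]; omega)
    exact h.eq_of_isImagePoint ht (hyt (by simp)) (hyt (by simp)) (hρ y t ht (hyt (by simp)))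
      (hyy ▸ hρ y' t ht (hyt (by simp)))
  refine ⟨Equiv.ofBijective ρ (Finite.injective_iff_bijective.mp hinj), fun t ht => ?_⟩
  refine (eq_of_subset_of_card_le (image_subset_iff.mpr fun y hy => (hρ y t ht hy).mem) ?_).symm
  rw [card_image_of_injective _ hinj, ht, h.card_up t ht]

theorem image_eq_down [Fintype α] (h : IsLayerMap k φ ψ) (hkα : k + 1 ≤ Fintype.card α)
    {σ : Perm α} (hσ : ∀ t, #t = k → φ t = t.image σ) {S : Finset α} (hS : #S + 1 = k) :
    ψ S = S.image σ := by
  obtain ⟨z₁, hz₁, z₂, hz₂, hz⟩ := one_lt_card.mp (by rw [card_compl]; omega : 1 < #Sᶜ)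
  rw [mem_compl] at hz₁ hz₂
  have hins : ∀ {z}, z ∉ S → #(insert z S) = k := fun hz => by rw [card_insert_of_notMem hz, hS]
  have hS₁₂ : insert z₁ S ∩ insert z₂ S = S := by
    ext x
    simp only [mem_inter, mem_insert]
    constructor
    · rintro ⟨rfl | h₁, h₂⟩
      · exact h₂.resolve_left hz
      · exact h₁
    · exact fun hx => ⟨.inr hx, .inr hx⟩
  have hsub : ψ S ⊆ S.image σ := fun x hx => by
    have h₁ := h.mono S _ hS (hins hz₁) (subset_insert z₁ S) hx
    have h₂ := h.mono S _ hS (hins hz₂) (subset_insert z₂ S) hx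
    rw [hσ _ (hins hz₁)] at h₁
    rw [hσ _ (hins hz₂)] at h₂
    rw [← hS₁₂, image_inter _ _ σ.injective]
    exact mem_inter.mpr ⟨h₁, h₂⟩
  refine eq_of_subset_of_card_le hsub ?_
  rw [card_image_of_injective _ σ.injective]
  have := h.card_down S hS
  omega

end IsLayerMap

end LayerMap

structure IsTournament {α : Type*} (T : α → α → Prop) : Prop where
  asymm : ∀ {a b}, T a b → ¬ T b a
  total : ∀ {a b}, a ≠ b → T a b ∨ T b a

/-- For a `3`-set of a tournament this says exactly that the triangle is a directed cycle. -/
def IsCyclicTriangle {α : Type*} (T : α → α → Prop) (t : Finset α) : Prop :=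
  ∀ x ∈ t, ∃ y ∈ t, T x y

theorem isCyclicTriangle_image {α : Type*} [DecidableEq α] {T : α → α → Prop} {g : Perm α}
    (hg : ∀ a b, T (g a) (g b) ↔ T a b) (t : Finset α) :
    IsCyclicTriangle T (t.image g) ↔ IsCyclicTriangle T t := by
  simp [IsCyclicTriangle, hg]

namespace IsTournament

variable {α : Type*} {T : α → α → Prop}

theorem irrefl (hT : IsTournament T) (a : α) : ¬ T a a := fun h => hT.asymm h h

theorem ne_of_rel (hT : IsTournament T) {a b : α} (h : T a b) : a ≠ b := by
  rintro rfl
  exact hT.irrefl a h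

/-- The `H`-orbits of `(a, b)` and `(b, a)` are distinct, and `a` beats `b` when the first comes
first in a fixed well-order of all orbits. -/
theorem exists_invariant (H : Subgroup (Perm α))
    (hswap : ∀ g ∈ H, ∀ a b, g a = b → g b = a → a = b) :
    ∃ T : α → α → Prop, IsTournament T ∧ ∀ g ∈ H, ∀ a b, T (g a) (g b) ↔ T a b := by
  let q : α × α → MulAction.orbitRel.Quotient H (α × α) := Quotient.mk _
  refine ⟨fun a b => WellOrderingRel (q (a, b)) (q (b, a)), ⟨fun h => asymm_of _ h, ?_⟩, ?_⟩
  · intro a b hab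
    rcases trichotomous_of WellOrderingRel (q (a, b)) (q (b, a)) with h | h | h
    · exact .inl h
    · obtain ⟨⟨g, hg⟩, hgba⟩ := MulAction.orbitRel_apply.mp (Quotient.exact h)
      simp only [Subgroup.mk_smul, Prod.smul_mk, Perm.smul_def, Prod.mk.injEq] at hgba
      exact absurd (hswap g hg b a hgba.1 hgba.2).symm hab
    · exact .inr h
  · intro g hg a b
    have hq : ∀ x y, q (g x, g y) = q (x, y) := fun x y => Quotient.sound ⟨⟨g, hg⟩, rfl⟩
    simp only [hq]

section Triangles

variable [DecidableEq α]

theorem rel_of_isCyclicTriangle (hT : IsTournament T) {p q r : α}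
    (hc : IsCyclicTriangle T {p, q, r}) (hpq : T p q) : T r p := by
  have hqr : T q r := by
    obtain ⟨y, hy, hqy⟩ := hc q (by simp)
    simp only [mem_insert, mem_singleton] at hy
    rcases hy with rfl | rfl | rfl
    · exact absurd hpq (hT.asymm hqy)
    · exact absurd hqy (hT.irrefl _)
    · exact hqy
  obtain ⟨y, hy, hry⟩ := hc r (by simp)
  simp only [mem_insert, mem_singleton] at hy
  rcases hy with rfl | rfl | rfl
  · exact hry
  · exact absurd hqr (hT.asymm hry)
  · exact absurd hry (hT.irrefl _)

theorem not_isCyclicTriangle (hT : IsTournament T) {p q r s : α} (hpq : T p q)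
    (hr : IsCyclicTriangle T {p, q, r}) (hs : IsCyclicTriangle T {p, q, s}) :
    ¬ IsCyclicTriangle T {p, r, s} := by
  intro h
  obtain ⟨y, hy, hpy⟩ := h p (by simp)
  simp only [mem_insert, mem_singleton] at hy
  rcases hy with rfl | rfl | rfl
  · exact hT.irrefl _ hpy
  · exact hT.asymm hpy (hT.rel_of_isCyclicTriangle hr hpq)
  · exact hT.asymm hpy (hT.rel_of_isCyclicTriangle hs hpq)

theorem exists_not_isCyclicTriangle [Fintype α] (hT : IsTournament T)
    (hα : 4 ≤ Fintype.card α) : ∃ t : Finset α, #t = 3 ∧ ¬ IsCyclicTriangle T t := by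
  by_contra! hall
  obtain ⟨u, -, hu⟩ := exists_subset_card_eq (s := (univ : Finset α)) (n := 4) (by simpa using hα)
  obtain ⟨a, v, hav, rfl, hv⟩ := card_eq_succ.mp hu
  obtain ⟨b, c, d, hbc, hbd, hcd, rfl⟩ := card_eq_three.mp hv
  simp only [mem_insert, mem_singleton, not_or] at hav
  have key : ∀ p q r s : α, T p q → p ≠ r → p ≠ s → r ≠ s → q ≠ r → q ≠ s → False :=
    fun p q r s hpq hpr hps hrs hqr hqs => hT.not_isCyclicTriangle hpq
      (hall _ (card_eq_three.mpr ⟨p, q, r, hT.ne_of_rel hpq, hpr, hqr, rfl⟩))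
      (hall _ (card_eq_three.mpr ⟨p, q, s, hT.ne_of_rel hpq, hps, hqs, rfl⟩))
      (hall _ (card_eq_three.mpr ⟨p, r, s, hpr, hps, hrs, rfl⟩))
  rcases hT.total hav.1 with h | h
  · exact key a b c d h hav.2.1 hav.2.2 hcd hbc hbd
  · exact key b a c d h hbc hbd hcd hav.2.1 hav.2.2

theorem trans_of_not_isCyclicTriangle (hT : IsTournament T)
    (h : ∀ t : Finset α, #t = 3 → ¬ IsCyclicTriangle T t) {a b c : α} (hab : T a b)
    (hbc : T b c) : T a c := by
  have hac : a ≠ c := by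
    rintro rfl
    exact hT.asymm hab hbc
  refine (hT.total hac).resolve_right fun hca => h {a, b, c} ?_ ?_
  · exact card_eq_three.mpr ⟨a, b, c, hT.ne_of_rel hab, hac, hT.ne_of_rel hbc, rfl⟩
  · intro x hx
    simp only [mem_insert, mem_singleton] at hx
    rcases hx with rfl | rfl | rfl
    · exact ⟨b, by simp, hab⟩
    · exact ⟨c, by simp, hbc⟩
    · exact ⟨a, by simp, hca⟩

end Triangles

/-- The number of predecessors strictly increases along `T` and is preserved by `g`. -/
theorem eq_one_of_trans [Finite α] (hT : IsTournament T)
    (htrans : ∀ {a b c}, T a b → T b c → T a c) {g : Perm α}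
    (hg : ∀ a b, T (g a) (g b) ↔ T a b) : g = 1 := by
  let N : α → ℕ := fun x => {z | T z x}.ncard
  have hN : ∀ x, N (g x) = N x := fun x => by
    have : {z | T z (g x)} = g '' {z | T z x} := by
      ext z
      constructor
      · intro hz
        exact ⟨g.symm z, (hg _ x).mp (by rwa [g.apply_symm_apply]), g.apply_symm_apply z⟩
      · rintro ⟨w, hw, rfl⟩
        exact (hg w x).mpr hw
    simp only [N, this, Set.ncard_image_of_injective _ g.injective]
  have hmono : ∀ {x y}, T x y → N x < N y := fun {x y} hxy =>
    Set.ncard_lt_ncard ⟨fun z hz => htrans hz hxy, fun h => hT.irrefl x (h hxy)⟩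
  ext x
  by_contra hx
  rcases hT.total hx with h | h
  · exact (hmono h).ne (hN x)
  · exact (hmono h).ne' (hN x)

end IsTournament

namespace Equiv.Perm

variable {α : Type*}

theorem exists_involutive_pow_of_swap [Finite α] {g : Perm α} {a b : α} (hab : a ≠ b)
    (ha : g a = b) (hb : g b = a) : ∃ n, g ^ n ≠ 1 ∧ Function.Involutive ⇑(g ^ n) := by
  have hsq : (g ^ 2) a = a := by rw [pow_two, mul_apply, ha, hb]
  obtain ⟨m, hm⟩ : Even (orderOf g) := by
    refine Nat.not_odd_iff_even.mp fun ⟨m, hm⟩ => hab ?_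
    calc a = (g ^ orderOf g) a := by rw [pow_orderOf_eq_one, one_apply]
      _ = b := by
        rw [hm, pow_succ', mul_apply, pow_mul, pow_apply_eq_self_of_apply_eq_self hsq, ha]
  have hpos := orderOf_pos g
  refine ⟨m, pow_ne_one_of_lt_orderOf (by omega) (by omega), fun x => ?_⟩
  rw [← mul_apply, ← pow_add, ← hm, pow_orderOf_eq_one, one_apply]

theorem sum_powersetCard_image [DecidableEq α] {M : Type*} [AddCommMonoid M] (σ : Perm α)
    (n : ℕ) (f : Finset α → M) (s : Finset α) :
    ∑ t ∈ (s.image σ).powersetCard n, f t = ∑ t ∈ s.powersetCard n, f (t.image σ) := by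
  have h : ∀ t : Finset α, t.image σ = t.map σ.toEmbedding := fun t => by simp [map_eq_image]
  simp only [h, powersetCard_map, sum_map]
  rfl

variable [Fintype α] [DecidableEq α]

theorem image_compl (σ : Perm α) (s : Finset α) : sᶜ.image σ = (s.image σ)ᶜ := by
  simp [← coe_inj, Set.image_compl_eq σ.bijective]

theorem eq_one_of_forall_image_eq_self {σ : Perm α} {k : ℕ} (hk : 0 < k)
    (hkα : k < Fintype.card α) (h : ∀ s : Finset α, #s = k → s.image σ = s) : σ = 1 := by
  ext y
  by_contra hy
  obtain ⟨s, hys, hs, hsc⟩ := exists_subsuperset_card_eq (t := univ.erase (σ y)) (n := k)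
    (singleton_subset_iff.mpr (mem_erase.mpr ⟨Ne.symm hy, mem_univ _⟩))
    (by rw [card_singleton]; omega) (by rw [card_erase_of_mem (mem_univ _), card_univ]; omega)
  have := h s hsc ▸ mem_image_of_mem σ (hys (mem_singleton_self y))
  exact (mem_erase.mp (hs this)).1 rfl

theorem exists_image_eq_self_card_add_two {σ : Perm α} (hσ : Function.Involutive σ)
    {s : Finset α} (hs : s.image σ = s) (hcard : #s + 2 ≤ Fintype.card α) :
    ∃ s' : Finset α, s'.image σ = s' ∧ #s' = #s + 2 := by
  have hcompl : ∀ x ∉ s, σ x ∉ s := fun x hx h => hx (hσ x ▸ hs ▸ mem_image_of_mem σ h)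
  obtain ⟨x, hx, y, hy, hxy⟩ := one_lt_card.mp (by rw [card_compl]; omega : 1 < #sᶜ)
  rw [mem_compl] at hx hy
  have pair : ∀ a b, a ∉ s → b ∉ s → a ≠ b → ({a, b} : Finset α).image σ = {a, b} →
      ∃ s' : Finset α, s'.image σ = s' ∧ #s' = #s + 2 := by
    intro a b ha hb hab hp
    refine ⟨{a, b} ∪ s, by rw [image_union, hp, hs], ?_⟩
    rw [card_union_of_disjoint (by simp [ha, hb]), card_pair hab, add_comm]
  by_cases hfx : σ x = x
  · by_cases hfy : σ y = y
    · exact pair x y hx hy hxy (by simp [image_insert, hfx, hfy])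
    · exact pair y (σ y) hy (hcompl y hy) (Ne.symm hfy)
        (by simp [image_insert, hσ y, pair_comm])
  · exact pair x (σ x) hx (hcompl x hx) (Ne.symm hfx)
      (by simp [image_insert, hσ x, pair_comm])

theorem exists_image_eq_self_of_involutive (hodd : Odd (Fintype.card α)) {σ : Perm α}
    (hσ : Function.Involutive σ) {k : ℕ} (hk : k ≤ Fintype.card α) :
    ∃ s : Finset α, s.image σ = s ∧ #s = k := by
  have even : ∀ m, 2 * m ≤ Fintype.card α → ∃ s : Finset α, s.image σ = s ∧ #s = 2 * m := by
    intro m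
    induction m with
    | zero => exact fun _ => ⟨∅, by simp, rfl⟩
    | succ m ih =>
      intro hm
      obtain ⟨s, hs, hsc⟩ := ih (by omega)
      obtain ⟨s', hs', hs'c⟩ := exists_image_eq_self_card_add_two hσ hs (by omega)
      exact ⟨s', hs', by omega⟩
  obtain ⟨m, rfl | rfl⟩ := Nat.even_or_odd' k
  · exact even m hk
  · obtain ⟨n, hn⟩ := hodd
    obtain ⟨s, hs, hsc⟩ := even (n - m) (by omega)
    exact ⟨sᶜ, by rw [image_compl, hs], by rw [card_compl]; omega⟩

section Regular

variable {k : ℕ} {H : Subgroup (Perm α)}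

theorem eq_of_swap_of_free (hodd : Odd (Fintype.card α)) (hk : k ≤ Fintype.card α)
    (hfree : ∀ g ∈ H, ∀ s : Finset α, #s = k → s.image g = s → g = 1) :
    ∀ g ∈ H, ∀ a b, g a = b → g b = a → a = b := by
  intro g hg a b ha hb
  by_contra hab
  obtain ⟨n, hn, hinv⟩ := exists_involutive_pow_of_swap hab ha hb
  obtain ⟨s, hs, hsc⟩ := exists_image_eq_self_of_involutive hodd hinv hk
  exact hn (hfree _ (H.pow_mem hg n) s hsc hs)

theorem exists_ne_one_of_transitive (hk : 0 < k) (hkα : k < Fintype.card α)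
    (htrans : ∀ s t : Finset α, #s = k → #t = k → ∃ g ∈ H, s.image g = t) :
    ∃ g ∈ H, g ≠ 1 := by
  obtain ⟨s, -, hs⟩ := exists_subset_card_eq (s := (univ : Finset α)) (n := k)
    (by rw [card_univ]; omega)
  obtain ⟨x, hx⟩ : s.Nonempty := card_pos.mp (by omega)
  obtain ⟨y, -, hy⟩ := exists_mem_notMem_of_card_lt_card (s := s) (t := univ)
    (by rw [card_univ]; omega)
  obtain ⟨g, hg, hgs⟩ := htrans s (insert y (s.erase x)) hs
    (by rw [card_insert_of_notMem fun h => hy (mem_of_mem_erase h), card_erase_add_one hx, hs])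
  refine ⟨g, hg, fun hg1 => hy ?_⟩
  rw [hg1, coe_one, image_id] at hgs
  exact hgs ▸ mem_insert_self y _

theorem sum_powersetCard_eq_of_transitive {M : Type*} [AddCommMonoid M]
    (hα : Fintype.card α + 1 = 2 * k)
    (htrans : ∀ s t : Finset α, #s = k → #t = k → ∃ g ∈ H, s.image g = t) (n : ℕ)
    {f : Finset α → M} (hf : ∀ g ∈ H, ∀ t, f (t.image g) = f t) :
    ∀ s t : Finset α, #s = #t → (#s = k - 1 ∨ #s = k - 1 + 1) →
      ∑ u ∈ s.powersetCard n, f u = ∑ u ∈ t.powersetCard n, f u := by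
  have hsum : ∀ g ∈ H, ∀ s : Finset α,
      ∑ u ∈ (s.image g).powersetCard n, f u = ∑ u ∈ s.powersetCard n, f u := fun g hg s => by
    simp only [sum_powersetCard_image, hf g hg]
  rintro s t hst (hs | hs)
  · obtain ⟨g, hg, hgst⟩ := htrans sᶜ tᶜ (by rw [card_compl]; omega) (by rw [card_compl]; omega)
    rw [image_compl, compl_inj_iff] at hgst
    rw [← hgst, hsum g hg]
  · obtain ⟨g, hg, hgst⟩ := htrans s t (by omega) (by omega)
    rw [← hgst, hsum g hg]

theorem false_of_regular_on_powersetCard (hk : 3 ≤ k) (hα : Fintype.card α + 1 = 2 * k)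
    (htrans : ∀ s t : Finset α, #s = k → #t = k → ∃ g ∈ H, s.image g = t)
    (hfree : ∀ g ∈ H, ∀ s : Finset α, #s = k → s.image g = s → g = 1) : False := by
  obtain ⟨T, hT, hTH⟩ :=
    IsTournament.exists_invariant H (eq_of_swap_of_free ⟨k - 1, by omega⟩ (by omega) hfree)
  by_cases hcyc : ∃ t : Finset α, #t = 3 ∧ IsCyclicTriangle T t
  · obtain ⟨t₀, ht₀, hcyc₀⟩ := hcyc
    classical
    let f : Finset α → ℤ := fun t => if IsCyclicTriangle T t then 1 else 0
    have hlevels := sum_powersetCard_eq_of_transitive hα htrans 3 (f := f) fun g hg t => by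
      simp only [f, isCyclicTriangle_image (hTH g hg)]
    obtain ⟨t, ht, hnot⟩ := hT.exists_not_isCyclicTriangle (by omega)
    have := eq_of_sum_powersetCard_three (by omega) (by omega) hlevels ht ht₀
    simp only [f, if_pos hcyc₀, if_neg hnot] at this
    exact zero_ne_one this
  · obtain ⟨g, hg, hg1⟩ := exists_ne_one_of_transitive (by omega) (by omega) htrans
    exact hg1 (hT.eq_one_of_trans
      (hT.trans_of_not_isCyclicTriangle fun t ht hc => hcyc ⟨t, ht, hc⟩) (hTH g hg))

end Regular

end Equiv.Perm

namespace HS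

variable {k : ℕ}

abbrev Point (k : ℕ) : Type := {x : ℕ // x ∈ Icc 2 (2 * k)}

theorem card_point (hk : 1 ≤ k) : Fintype.card (Point k) + 1 = 2 * k := by
  simp only [Fintype.card_coe, Nat.card_Icc]
  omega

theorem Icc_two_subset : Icc 2 (2 * k) ⊆ Icc 1 (2 * k) := Icc_subset_Icc (by norm_num) le_rfl

def points (v : hsVert (2 * k) k) : Finset (Point k) := v.1.subtype (· ∈ Icc 2 (2 * k))

theorem mem_points {v : hsVert (2 * k) k} {x : Point k} : x ∈ points v ↔ x.1 ∈ v.1 :=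
  mem_subtype

theorem mem_Icc_of_mem {v : hsVert (2 * k) k} {x : ℕ} (hx : x ∈ v.1) (hx1 : x ≠ 1) :
    x ∈ Icc 2 (2 * k) := by
  have := v.2.1 hx
  simp only [mem_Icc] at this ⊢
  omega

theorem ext_of_points {v w : hsVert (2 * k) k} (h1 : 1 ∈ v.1 ↔ 1 ∈ w.1)
    (h : points v = points w) : v = w := by
  refine Subtype.ext (Finset.ext fun x => ?_)
  obtain rfl | hx1 := eq_or_ne x 1
  · exact h1
  have hpt : ∀ {u : hsVert (2 * k) k} (hx : x ∈ u.1),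
      (⟨x, mem_Icc_of_mem hx hx1⟩ : Point k) ∈ points u := fun hx => mem_points.mpr hx
  exact ⟨fun hx => mem_points.mp (h ▸ hpt hx), fun hx => mem_points.mp (h.symm ▸ hpt hx)⟩

theorem card_points (v : hsVert (2 * k) k) : #(points v) = #(v.1.erase 1) := by
  rw [points, card_subtype]
  congr 1
  ext x
  simp only [mem_filter, mem_erase]
  constructor
  · rintro ⟨hx, hxY⟩
    exact ⟨by simp only [mem_Icc] at hxY; omega, hx⟩
  · rintro ⟨hx1, hx⟩
    exact ⟨hx, mem_Icc_of_mem hx hx1⟩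

theorem card_points_of_one_notMem {v : hsVert (2 * k) k} (hv : 1 ∉ v.1) : #(points v) = k := by
  rw [card_points, erase_eq_of_notMem hv, v.2.2]

theorem card_points_of_one_mem {v : hsVert (2 * k) k} (hv : 1 ∈ v.1) :
    #(points v) + 1 = k := by
  rw [card_points, card_erase_add_one hv, v.2.2]

def upper (t : Finset (Point k)) (ht : #t = k) : hsVert (2 * k) k :=
  ⟨t.map (Function.Embedding.subtype _),
    fun _ hx => Icc_two_subset (property_of_mem_map_subtype t hx), by rw [card_map, ht]⟩

def lower (S : Finset (Point k)) (hS : #S + 1 = k) : hsVert (2 * k) k :=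
  ⟨insert 1 (S.map (Function.Embedding.subtype _)), fun x hx => by
    obtain rfl | hx := mem_insert.mp hx
    · simp only [mem_Icc]
      omega
    · exact Icc_two_subset (property_of_mem_map_subtype S hx),
    by rw [card_insert_of_notMem (by simp), card_map, hS]⟩

theorem one_notMem_upper (t : Finset (Point k)) (ht : #t = k) : 1 ∉ (upper t ht).1 := by
  simp [upper]

theorem one_mem_lower (S : Finset (Point k)) (hS : #S + 1 = k) : 1 ∈ (lower S hS).1 := by
  simp [lower]

theorem points_upper (t : Finset (Point k)) (ht : #t = k) : points (upper t ht) = t := by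
  ext x
  simp [mem_points, upper]

theorem points_lower (S : Finset (Point k)) (hS : #S + 1 = k) : points (lower S hS) = S := by
  ext x
  simp only [mem_points, lower, mem_insert, mem_map, Function.Embedding.subtype_apply]
  have := (mem_Icc.mp x.2).1
  constructor
  · rintro (h | ⟨y, hy, hyx⟩)
    · omega
    · exact Subtype.ext hyx ▸ hy
  · exact fun hx => .inr ⟨x, hx, rfl⟩

theorem upper_points {v : hsVert (2 * k) k} (hv : 1 ∉ v.1) :
    upper (points v) (card_points_of_one_notMem hv) = v :=
  ext_of_points (by simp [one_notMem_upper, hv]) (points_upper _ _)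

theorem lower_points {v : hsVert (2 * k) k} (hv : 1 ∈ v.1) :
    lower (points v) (card_points_of_one_mem hv) = v :=
  ext_of_points (by simp [one_mem_lower, hv]) (points_lower _ _)

theorem one_mem_iff_one_notMem_of_adj {v w : hsVert (2 * k) k} (h : (HS (2 * k) k).Adj v w) :
    1 ∈ v.1 ↔ 1 ∉ w.1 := by
  rw [HS, SimpleGraph.fromRel_adj] at h
  tauto

theorem adj_iff_points_subset {v w : hsVert (2 * k) k} (hv : 1 ∈ v.1) (hw : 1 ∉ w.1) :
    (HS (2 * k) k).Adj v w ↔ points v ⊆ points w := by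
  have hsub : v.1 ∩ w.1 ⊆ v.1.erase 1 := fun x hx =>
    mem_erase.mpr ⟨fun h => hw (h ▸ (mem_inter.mp hx).2), (mem_inter.mp hx).1⟩
  have hcard : #(v.1.erase 1) = k - 1 := by rw [card_erase_of_mem hv, v.2.2]
  have hinter : #(v.1 ∩ w.1) = k - 1 ↔ v.1.erase 1 ⊆ w.1 := by
    constructor
    · intro h x hx
      rw [← eq_of_subset_of_card_le hsub (by rw [h, hcard])] at hx
      exact (mem_inter.mp hx).2
    · intro h
      rw [← hcard, eq_of_subset_of_card_le hsub (card_le_card fun x hx =>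
        mem_inter.mpr ⟨mem_of_mem_erase hx, h hx⟩)]
  have hpoints : v.1.erase 1 ⊆ w.1 ↔ points v ⊆ points w := by
    constructor
    · intro h x hx
      have hx1 : x.1 ≠ 1 := by have := (mem_Icc.mp x.2).1; omega
      exact mem_points.mpr (h (mem_erase.mpr ⟨hx1, mem_points.mp hx⟩))
    · intro h x hx
      obtain ⟨hx1, hxv⟩ := mem_erase.mp hx
      exact mem_points.mp
        (h (mem_points.mpr hxv : (⟨x, mem_Icc_of_mem hxv hx1⟩ : Point k) ∈ points v))
  have hne : v ≠ w := by
    rintro rfl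
    exact hw hv
  rw [HS, SimpleGraph.fromRel_adj, ← hpoints, ← hinter]
  tauto

theorem adj_lower_upper {S t : Finset (Point k)} (hS : #S + 1 = k) (ht : #t = k) :
    (HS (2 * k) k).Adj (lower S hS) (upper t ht) ↔ S ⊆ t := by
  rw [adj_iff_points_subset (one_mem_lower S hS) (one_notMem_upper t ht), points_lower,
    points_upper]

instance : MulAction (Perm (Point k)) (hsVert (2 * k) k) where
  smul σ v := ⟨v.1.image (Perm.ofSubtype σ), fun x hx => by
    obtain ⟨y, hy, rfl⟩ := mem_image.mp hx
    by_cases hyY : y ∈ Icc 2 (2 * k)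
    · exact Icc_two_subset ((Perm.ofSubtype_apply_mem_iff_mem σ y).mpr hyY)
    · rw [Perm.ofSubtype_apply_of_not_mem σ hyY]
      exact v.2.1 hy,
    by rw [card_image_of_injective _ (Perm.ofSubtype σ).injective, v.2.2]⟩
  one_smul v := Subtype.ext <| show v.1.image (Perm.ofSubtype 1) = v.1 by simp
  mul_smul σ τ v := Subtype.ext <|
    show v.1.image (Perm.ofSubtype (σ * τ)) = (v.1.image (Perm.ofSubtype τ)).image _ by
      rw [map_mul, Perm.coe_mul, image_image]

theorem smul_val (σ : Perm (Point k)) (v : hsVert (2 * k) k) :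
    (σ • v).1 = v.1.image (Perm.ofSubtype σ) := rfl

theorem one_mem_smul (σ : Perm (Point k)) (v : hsVert (2 * k) k) :
    1 ∈ (σ • v).1 ↔ 1 ∈ v.1 := by
  have h1 : Perm.ofSubtype σ 1 = 1 := Perm.ofSubtype_apply_of_not_mem σ (by simp)
  rw [smul_val, mem_image]
  constructor
  · rintro ⟨y, hy, hy1⟩
    exact (Perm.ofSubtype σ).injective (hy1.trans h1.symm) ▸ hy
  · exact fun h => ⟨1, h, h1⟩

theorem points_smul (σ : Perm (Point k)) (v : hsVert (2 * k) k) :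
    points (σ • v) = (points v).image σ := by
  ext x
  simp only [mem_points, smul_val, mem_image]
  constructor
  · rintro ⟨y, hy, hyx⟩
    have hyY : y ∈ Icc 2 (2 * k) := (Perm.ofSubtype_apply_mem_iff_mem σ y).mp (hyx ▸ x.2)
    exact ⟨⟨y, hyY⟩, hy, Subtype.ext (by rw [← hyx, Perm.ofSubtype_apply_of_mem])⟩
  · rintro ⟨z, hz, rfl⟩
    exact ⟨z.1, hz, Perm.ofSubtype_apply_coe σ z⟩

section Automorphisms

variable {e : Perm (hsVert (2 * k) k)}

theorem one_mem_apply_iff_of_adj (he : e ∈ graphAut (HS (2 * k) k)) {v w : hsVert (2 * k) k}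
    (hvw : (HS (2 * k) k).Adj v w) :
    (1 ∈ (e v).1 ↔ 1 ∈ v.1) ↔ (1 ∈ (e w).1 ↔ 1 ∈ w.1) := by
  have h₁ := one_mem_iff_one_notMem_of_adj hvw
  have h₂ := one_mem_iff_one_notMem_of_adj ((he v w).mpr hvw)
  tauto

theorem one_mem_apply_iff (he : e ∈ graphAut (HS (2 * k) k)) {w₀ : hsVert (2 * k) k}
    (hw₀ : 1 ∉ w₀.1) (he₀ : 1 ∉ (e w₀).1) (v : hsVert (2 * k) k) :
    1 ∈ (e v).1 ↔ 1 ∈ v.1 := by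
  have hupper : ∀ t (ht : #t = k), 1 ∈ (e (upper t ht)).1 ↔ 1 ∈ (upper t ht).1 := by
    intro t ht
    refine (induction_on_exchange
      (P := fun u => ∃ hu : #u = k, 1 ∈ (e (upper u hu)).1 ↔ 1 ∈ (upper u hu).1)
      ((card_points_of_one_notMem hw₀).trans ht.symm) ⟨card_points_of_one_notMem hw₀, ?_⟩ ?_).2
    · rw [upper_points hw₀]
      exact iff_of_false he₀ hw₀
    · rintro u a b ha - hb - ⟨hu, hQ⟩
      have hC : #(u.erase a) + 1 = k := by rw [card_erase_add_one ha, hu]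
      have hu' : #(insert b (u.erase a)) = k := by
        rw [card_insert_of_notMem fun h => hb (mem_of_mem_erase h), card_erase_add_one ha, hu]
      have h₁ := one_mem_apply_iff_of_adj he ((adj_lower_upper hC hu).mpr (erase_subset a u))
      have h₂ := one_mem_apply_iff_of_adj he ((adj_lower_upper hC hu').mpr (subset_insert b _))
      exact ⟨hu', h₂.mp (h₁.mpr hQ)⟩
  by_cases hv : 1 ∈ v.1
  · have hS := card_points_of_one_mem hv
    obtain ⟨z, hz⟩ : ∃ z, z ∉ points v := by
      by_contra! h
      have := card_point (k := k) (by omega)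
      rw [eq_univ_of_forall h, card_univ] at hS
      omega
    have hz' : #(insert z (points v)) = k := by rw [card_insert_of_notMem hz, hS]
    have := one_mem_apply_iff_of_adj he ((adj_lower_upper hS hz').mpr (subset_insert z _))
    rw [lower_points hv] at this
    exact this.mpr (hupper _ hz')
  · have := hupper _ (card_points_of_one_notMem hv)
    rwa [upper_points hv] at this

def upperMap (e : Perm (hsVert (2 * k) k)) (t : Finset (Point k)) : Finset (Point k) :=
  if ht : #t = k then points (e (upper t ht)) else ∅

def lowerMap (e : Perm (hsVert (2 * k) k)) (S : Finset (Point k)) : Finset (Point k) :=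
  if hS : #S + 1 = k then points (e (lower S hS)) else ∅

theorem upperMap_eq (t : Finset (Point k)) (ht : #t = k) :
    upperMap e t = points (e (upper t ht)) := dif_pos ht

theorem lowerMap_eq (S : Finset (Point k)) (hS : #S + 1 = k) :
    lowerMap e S = points (e (lower S hS)) := dif_pos hS

theorem isLayerMap (he : e ∈ graphAut (HS (2 * k) k)) (hlev : ∀ v, 1 ∈ (e v).1 ↔ 1 ∈ v.1) :
    IsLayerMap k (upperMap e) (lowerMap e) := by
  have hup : ∀ t (ht : #t = k), 1 ∉ (e (upper t ht)).1 := fun t ht =>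
    (hlev _).not.mpr (one_notMem_upper t ht)
  have hdown : ∀ S (hS : #S + 1 = k), 1 ∈ (e (lower S hS)).1 := fun S hS =>
    (hlev _).mpr (one_mem_lower S hS)
  refine ⟨fun t ht => ?_, fun S hS => ?_, fun t t' ht ht' h => ?_, fun S S' hS hS' h => ?_,
    fun S t hS ht hSt => ?_⟩
  · rw [upperMap_eq t ht]
    exact card_points_of_one_notMem (hup t ht)
  · rw [lowerMap_eq S hS]
    exact card_points_of_one_mem (hdown S hS)
  · rw [upperMap_eq t ht, upperMap_eq t' ht'] at h
    have := e.injective (ext_of_points (iff_of_false (hup t ht) (hup t' ht')) h)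
    rw [← points_upper t ht, this, points_upper]
  · rw [lowerMap_eq S hS, lowerMap_eq S' hS'] at h
    have := e.injective (ext_of_points (iff_of_true (hdown S hS) (hdown S' hS')) h)
    rw [← points_lower S hS, this, points_lower]
  · rw [upperMap_eq t ht, lowerMap_eq S hS, ← adj_iff_points_subset (hdown S hS) (hup t ht), he]
    exact (adj_lower_upper hS ht).mpr hSt

theorem exists_perm_eq_smul (hk : 2 ≤ k) (he : e ∈ graphAut (HS (2 * k) k))
    (hlev : ∀ v, 1 ∈ (e v).1 ↔ 1 ∈ v.1) : ∃ σ : Perm (Point k), ∀ v, e v = σ • v := by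
  have hL := isLayerMap he hlev
  have hcard := card_point (k := k) (by omega)
  obtain ⟨σ, hσ⟩ := hL.exists_perm_image_eq hk (by omega)
  refine ⟨σ, fun v => ext_of_points (by rw [hlev, one_mem_smul]) ?_⟩
  rw [points_smul]
  by_cases hv : 1 ∈ v.1
  · have := lowerMap_eq (e := e) _ (card_points_of_one_mem hv)
    rwa [lower_points hv, hL.image_eq_down (by omega) hσ (card_points_of_one_mem hv),
      eq_comm] at this
  · have := upperMap_eq (e := e) _ (card_points_of_one_notMem hv)
    rwa [upper_points hv, hσ _ (card_points_of_one_notMem hv), eq_comm] at this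

end Automorphisms

section Regular

variable {R : Subgroup (Perm (hsVert (2 * k) k))}

theorem exists_perm_of_regular (hk : 2 ≤ k) (hRA : R ≤ graphAut (HS (2 * k) k))
    (hreg : ∀ u v : hsVert (2 * k) k, ∃! g : ↥R, (g : Perm (hsVert (2 * k) k)) u = v)
    {s t : Finset (Point k)} (hs : #s = k) (ht : #t = k) :
    ∃ σ ∈ R.comap (MulAction.toPermHom (Perm (Point k)) (hsVert (2 * k) k)), s.image σ = t := by
  obtain ⟨⟨g, hg⟩, hgst, -⟩ := hreg (upper s hs) (upper t ht)
  change g (upper s hs) = upper t ht at hgst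
  obtain ⟨σ, hσ⟩ := exists_perm_eq_smul hk (hRA hg)
    (one_mem_apply_iff (hRA hg) (one_notMem_upper s hs) (hgst ▸ one_notMem_upper t ht))
  have hσg : MulAction.toPerm σ = g := Equiv.ext fun v => (hσ v).symm
  refine ⟨σ, by rwa [Subgroup.mem_comap, MulAction.toPermHom_apply, hσg], ?_⟩
  rw [← points_upper s hs, ← points_smul, ← hσ, hgst, points_upper]

theorem eq_one_of_regular (hk : 2 ≤ k)
    (hreg : ∀ u v : hsVert (2 * k) k, ∃! g : ↥R, (g : Perm (hsVert (2 * k) k)) u = v)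
    {σ : Perm (Point k)}
    (hσ : σ ∈ R.comap (MulAction.toPermHom (Perm (Point k)) (hsVert (2 * k) k)))
    {s : Finset (Point k)} (hs : #s = k) (hfix : s.image σ = s) : σ = 1 := by
  have hfix' : ∀ t (ht : #t = k), σ • upper t ht = upper t ht ↔ t.image σ = t := fun t ht =>
    ⟨fun h => by rw [← points_upper t ht, ← points_smul, h], fun h =>
      ext_of_points (one_mem_smul σ _) (by rw [points_smul, points_upper, h])⟩
  have h1 : MulAction.toPerm σ = (1 : Perm (hsVert (2 * k) k)) :=
    congrArg Subtype.val ((hreg (upper s hs) (upper s hs)).unique (y₁ := ⟨_, hσ⟩) (y₂ := 1)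
      ((hfix' s hs).mpr hfix) rfl)
  have hcard := card_point (k := k) (by omega)
  refine Perm.eq_one_of_forall_image_eq_self (k := k) (by omega) (by omega)
    fun t ht => (hfix' t ht).mp ?_
  simpa using congrArg (· (upper t ht)) h1

end Regular

end HS

/-- For `k ≥ 3`, `HS(2k,k)` is not a Cayley graph: its automorphism group contains no
subgroup acting regularly on the vertex set (i.e. no subgroup `R` such that for every pair
of vertices `u, v` there is exactly one element of `R` sending `u` to `v`). -/
theorem stmt18 (k : ℕ) (hk : 3 ≤ k) :
    ¬ ∃ R : Subgroup (Equiv.Perm (hsVert (2*k) k)),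
        R ≤ graphAut (HS (2*k) k) ∧
        ∀ u v : hsVert (2*k) k, ∃! g : ↥R, (g : Equiv.Perm (hsVert (2*k) k)) u = v := by
  rintro ⟨R, hRA, hreg⟩
  exact Perm.false_of_regular_on_powersetCard hk (HS.card_point (by omega))
    (fun s t hs ht => HS.exists_perm_of_regular (by omega) hRA hreg hs ht)
    (fun σ hσ s hs hfix => HS.eq_one_of_regular (by omega) hreg hσ hs hfix)
end

section
/- If a subgroup M of Sym({1,...,2k}) fixes the point 1 and acts transitively on the (k-1)-element subsets of {2,...,2k} (i.e., is (k-1)-homogeneous on a set of size 2k-1), and |M| = (1/2)·C(2k,k), then k ∈ {1,2,3}. -/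
/-!
Suppose `k ≥ 4` and let `n = 2k - 1` be the size of `Ω = {2, …, 2k}`. Then
`|M| = C(2k, k) / 2 = C(n, k - 1)`. Since `2(k - 2) < n`, the Livingstone–Wagner argument shows
that `M`, being `(k - 1)`-homogeneous on `Ω`, is also `(k - 2)`-homogeneous: an `M`-invariant
function on `(k - 2)`-subsets with zero sum is sent by the inclusion map `U` to an `M`-invariant,
hence constant, hence zero function on `(k - 1)`-subsets, and `U` is injective because
`‖U f‖² = ‖D f‖² + (n - 2(k - 2)) ‖f‖²` with `D` the map to `(k - 3)`-subsets.
Orbit–stabilizer then gives `C(n, k - 2) ∣ |M| = C(n, k - 1)`, whereas the quotient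
`C(n, k - 1) / C(n, k - 2) = (k + 1) / (k - 1)` lies strictly between `1` and `2`.
-/

open Finset
open scoped Pointwise

theorem sum_sq_sum_filter {ι κ R : Type*} [CommSemiring R] (u : Finset κ) (s : Finset ι)
    (p : ι → κ → Prop) [∀ i x, Decidable (p i x)] (f : ι → R) :
    ∑ x ∈ u, (∑ i ∈ s with p i x, f i) ^ 2
      = ∑ i ∈ s, ∑ i' ∈ s, f i * f i' * #{x ∈ u | p i x ∧ p i' x} := by
  simp_rw [sq, sum_filter, sum_mul_sum, card_filter, Nat.cast_sum, mul_sum]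
  rw [sum_comm]
  refine sum_congr rfl fun i _ => ?_
  rw [sum_comm]
  refine sum_congr rfl fun i' _ => sum_congr rfl fun x _ => ?_
  by_cases hi : p i x <;> by_cases hi' : p i' x <;> simp [hi, hi']

section SubsetCounting

variable {α : Type*} [DecidableEq α]

theorem card_common_supersets_eq {Ω A A' : Finset α} {j : ℕ} (hn : 2 * (j + 1) ≤ #Ω)
    (hA : A ∈ Ω.powersetCard (j + 1)) (hA' : A' ∈ Ω.powersetCard (j + 1)) :
    #{B ∈ Ω.powersetCard (j + 2) | A ⊆ B ∧ A' ⊆ B}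
      = #{C ∈ Ω.powersetCard j | C ⊆ A ∧ C ⊆ A'} + if A = A' then #Ω - 2 * (j + 1) else 0 := by
  rw [mem_powersetCard] at hA hA'
  have hup : {B ∈ Ω.powersetCard (j + 2) | A ⊆ B ∧ A' ⊆ B}
      = {B ∈ Ω.powersetCard (j + 2) | A ∪ A' ⊆ B} := by simp only [union_subset_iff]
  have hdown : {C ∈ Ω.powersetCard j | C ⊆ A ∧ C ⊆ A'} = (A ∩ A').powersetCard j := by
    ext C
    simp only [mem_filter, mem_powersetCard, subset_inter_iff]
    exact ⟨fun h => ⟨h.2, h.1.2⟩, fun h => ⟨⟨h.1.1.trans hA.1, h.2⟩, h.1⟩⟩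
  have hunion := card_union_add_card_inter A A'
  have hUΩ : A ∪ A' ⊆ Ω := union_subset hA.1 hA'.1
  rw [hup, hdown, card_powersetCard]
  split_ifs with heq
  · subst heq
    rw [union_self, card_filter_powersetCard_subset _ _ _ hA.1 (by omega), hA.2,
      show j + 2 - (j + 1) = 1 by omega, Nat.choose_one_right, inter_self, hA.2,
      Nat.choose_succ_self_right]
    omega
  · have hlarge : j + 2 ≤ #(A ∪ A') := by
      by_contra! hsmall
      have hAU : A = A ∪ A' := eq_of_subset_of_card_le subset_union_left (by omega)
      exact heq (eq_of_subset_of_card_le (hAU ▸ subset_union_right) (by omega)).symm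
    rcases hlarge.eq_or_lt with hU | hU
    · rw [card_filter_powersetCard_subset _ _ _ hUΩ hU.ge, ← hU, Nat.sub_self,
        Nat.choose_zero_right, show #(A ∩ A') = j by omega, Nat.choose_self]
    · rw [filter_false_of_mem fun B hB hUB => by
          have := card_le_card hUB; rw [(mem_powersetCard.1 hB).2] at this; omega,
        Nat.choose_eq_zero_of_lt (by omega), card_empty]

theorem sum_sum_filter_powersetCard_subset {R : Type*} [AddCommMonoid R] (Ω : Finset α) (j : ℕ)
    (f : Finset α → R) :
    ∑ B ∈ Ω.powersetCard (j + 1), ∑ A ∈ Ω.powersetCard j with A ⊆ B, f A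
      = (#Ω - j) • ∑ A ∈ Ω.powersetCard j, f A := by
  rw [smul_sum]
  simp_rw [sum_filter]
  rw [sum_comm]
  refine sum_congr rfl fun A hA => ?_
  rw [mem_powersetCard] at hA
  rw [← sum_filter, sum_const, card_filter_powersetCard_subset _ _ _ hA.1 (by omega), hA.2,
    Nat.add_sub_cancel_left, Nat.choose_one_right]

end SubsetCounting

theorem eq_zero_of_forall_sum_filter_subset_eq_zero {α K : Type*} [DecidableEq α] [CommRing K]
    [LinearOrder K] [IsStrictOrderedRing K] {Ω : Finset α} {j : ℕ} (hn : 2 * (j + 1) < #Ω)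
    {f : Finset α → K}
    (hf : ∀ B ∈ Ω.powersetCard (j + 2), ∑ A ∈ Ω.powersetCard (j + 1) with A ⊆ B, f A = 0) :
    ∀ A ∈ Ω.powersetCard (j + 1), f A = 0 := by
  set s := Ω.powersetCard (j + 1)
  have hsq : ∑ B ∈ Ω.powersetCard (j + 2), (∑ A ∈ s with A ⊆ B, f A) ^ 2
      = ∑ C ∈ Ω.powersetCard j, (∑ A ∈ s with C ⊆ A, f A) ^ 2
        + ((#Ω - 2 * (j + 1) : ℕ) : K) * ∑ A ∈ s, f A ^ 2 := by
    rw [sum_sq_sum_filter, sum_sq_sum_filter, mul_sum, ← sum_add_distrib]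
    refine sum_congr rfl fun A hA => ?_
    rw [show ((#Ω - 2 * (j + 1) : ℕ) : K) * f A ^ 2
        = ∑ A' ∈ s, if A = A' then f A * f A' * ((#Ω - 2 * (j + 1) : ℕ) : K) else 0 by
      rw [sum_ite_eq, if_pos hA]; ring, ← sum_add_distrib]
    refine sum_congr rfl fun A' hA' => ?_
    rw [card_common_supersets_eq hn.le hA hA']
    split_ifs with h
    · subst h; push_cast; ring
    · simp
  have hzero : ∑ A ∈ s, f A ^ 2 = 0 := by
    rw [sum_congr rfl fun B hB => by rw [hf B hB, zero_pow two_ne_zero], sum_const_zero] at hsq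
    have hdown : 0 ≤ ∑ C ∈ Ω.powersetCard j, (∑ A ∈ s with C ⊆ A, f A) ^ 2 :=
      sum_nonneg fun _ _ => sq_nonneg _
    have hd : (0 : K) < ((#Ω - 2 * (j + 1) : ℕ) : K) := by exact_mod_cast Nat.sub_pos_of_lt hn
    have hnonneg : 0 ≤ ∑ A ∈ s, f A ^ 2 := sum_nonneg fun _ _ => sq_nonneg _
    nlinarith
  intro A hA
  exact pow_eq_zero_iff two_ne_zero |>.1 <|
    (sum_eq_zero_iff_of_nonneg fun _ _ => sq_nonneg _).1 hzero A hA

section Homogeneous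

open MulAction

variable {G α : Type*} [Group G] [MulAction G α] [DecidableEq α]

variable (G) in
def IsHomogeneousOn (Ω : Finset α) (j : ℕ) : Prop :=
  ∀ A ∈ Ω.powersetCard j, ∀ B ∈ Ω.powersetCard j, ∃ g : G, g • A = B

theorem sum_filter_powersetCard_subset_smul {R : Type*} [AddCommMonoid R] {Ω B : Finset α}
    {j : ℕ} {f : Finset α → R} (hf : ∀ (g : G) A, f (g • A) = f A) {g : G} (hB : B ⊆ Ω)
    (hgB : g • B ⊆ Ω) :
    ∑ A ∈ Ω.powersetCard j with A ⊆ g • B, f A = ∑ A ∈ Ω.powersetCard j with A ⊆ B, f A := by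
  refine sum_nbij' (g⁻¹ • ·) (g • ·) ?_ ?_ (fun A _ => smul_inv_smul g A)
    (fun A _ => inv_smul_smul g A) (fun A _ => by rw [hf])
  · intro A hA
    simp only [mem_filter, mem_powersetCard] at hA ⊢
    have hAB : g⁻¹ • A ⊆ B := subset_smul_finset_iff.1 hA.2
    exact ⟨⟨hAB.trans hB, by rw [card_smul_finset, hA.1.2]⟩, hAB⟩
  · intro A hA
    simp only [mem_filter, mem_powersetCard] at hA ⊢
    have hAB : g • A ⊆ g • B := smul_finset_subset_smul_finset hA.2
    exact ⟨⟨hAB.trans hgB, by rw [card_smul_finset, hA.1.2]⟩, hAB⟩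

theorem IsHomogeneousOn.eq_zero_of_smul_invariant {K : Type*} [CommRing K] [LinearOrder K]
    [IsStrictOrderedRing K] {Ω : Finset α} {j : ℕ} (h : IsHomogeneousOn G Ω (j + 2))
    (hn : 2 * (j + 1) < #Ω) {f : Finset α → K} (hf : ∀ (g : G) A, f (g • A) = f A)
    (hsum : ∑ A ∈ Ω.powersetCard (j + 1), f A = 0) :
    ∀ A ∈ Ω.powersetCard (j + 1), f A = 0 := by
  obtain ⟨B₀, hB₀⟩ : (Ω.powersetCard (j + 2)).Nonempty := powersetCard_nonempty.2 (by omega)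
  have hconst : ∀ B ∈ Ω.powersetCard (j + 2), ∑ A ∈ Ω.powersetCard (j + 1) with A ⊆ B, f A
      = ∑ A ∈ Ω.powersetCard (j + 1) with A ⊆ B₀, f A := by
    intro B hB
    obtain ⟨g, rfl⟩ := h B₀ hB₀ B hB
    exact sum_filter_powersetCard_subset_smul hf (mem_powersetCard.1 hB₀).1
      (mem_powersetCard.1 hB).1
  have hB₀zero : ∑ A ∈ Ω.powersetCard (j + 1) with A ⊆ B₀, f A = 0 := by
    have htotal := sum_sum_filter_powersetCard_subset Ω (j + 1) f
    rw [sum_congr rfl hconst, sum_const, hsum, smul_zero, smul_eq_zero] at htotal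
    exact htotal.resolve_left (card_ne_zero.2 ⟨B₀, hB₀⟩)
  exact eq_zero_of_forall_sum_filter_subset_eq_zero hn fun B hB => (hconst B hB).trans hB₀zero

theorem IsHomogeneousOn.of_succ {Ω : Finset α} {j : ℕ} (h : IsHomogeneousOn G Ω (j + 2))
    (hn : 2 * (j + 1) < #Ω) : IsHomogeneousOn G Ω (j + 1) := by
  classical
  intro A₀ hA₀ A₁ hA₁
  by_contra! hne
  set s := Ω.powersetCard (j + 1)
  set O₀ := {A ∈ s | orbit G A = orbit G A₀}
  set O₁ := {A ∈ s | orbit G A = orbit G A₁}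
  have hO₀ : (#O₀ : ℚ) ≠ 0 :=
    Nat.cast_ne_zero.2 <| card_ne_zero.2 ⟨A₀, mem_filter.2 ⟨hA₀, rfl⟩⟩
  have hO₁ : (#O₁ : ℚ) ≠ 0 :=
    Nat.cast_ne_zero.2 <| card_ne_zero.2 ⟨A₁, mem_filter.2 ⟨hA₁, rfl⟩⟩
  set f : Finset α → ℚ := fun A =>
    (if orbit G A = orbit G A₀ then (#O₀ : ℚ)⁻¹ else 0)
      - if orbit G A = orbit G A₁ then (#O₁ : ℚ)⁻¹ else 0
  have hf : ∀ (g : G) A, f (g • A) = f A := by simp [f, orbit_smul]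
  have hsum : ∑ A ∈ s, f A = 0 := by
    simp only [f, sum_sub_distrib, ← sum_filter, sum_const, nsmul_eq_mul]
    rw [mul_inv_cancel₀ hO₀, mul_inv_cancel₀ hO₁, sub_self]
  have hfA₀ := h.eq_zero_of_smul_invariant hn hf hsum A₀ hA₀
  have horbit : orbit G A₀ ≠ orbit G A₁ := fun heq =>
    let ⟨g, hg⟩ := mem_orbit_iff.1 (orbit_eq_iff.1 heq.symm)
    hne g hg
  simp [f, horbit, hO₀] at hfA₀

theorem IsHomogeneousOn.card_powersetCard_dvd {Ω : Finset α} {j : ℕ} (h : IsHomogeneousOn G Ω j)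
    (hΩ : ∀ g : G, ∀ x ∈ Ω, g • x ∈ Ω) (hj : j ≤ #Ω) : #(Ω.powersetCard j) ∣ Nat.card G := by
  obtain ⟨A₀, hA₀⟩ : (Ω.powersetCard j).Nonempty := powersetCard_nonempty.2 hj
  have horbit : orbit G A₀ = Ω.powersetCard j := by
    ext A
    refine ⟨?_, fun hA => h A₀ hA₀ A hA⟩
    rintro ⟨g, rfl⟩
    rw [mem_powersetCard] at hA₀
    refine mem_powersetCard.2 ⟨fun y hy => ?_, by rw [card_smul_finset, hA₀.2]⟩
    obtain ⟨x, hx, rfl⟩ := mem_smul_finset.1 hy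
    exact hΩ g x (hA₀.1 hx)
  rw [← Set.ncard_coe_finset, ← horbit, ← index_stabilizer]
  exact Subgroup.index_dvd_card _

end Homogeneous

theorem Equiv.Perm.apply_mem_of_forall_notMem {α : Type*} {σ : Equiv.Perm α} {s : Set α}
    (h : ∀ x ∉ s, σ x = x) {x : α} (hx : x ∈ s) : σ x ∈ s := by
  by_contra hσx
  rw [σ.injective (h _ hσx)] at hσx
  exact hσx hx

theorem not_choose_dvd_choose_succ {n i : ℕ} (h₁ : i + 1 < n - i) (h₂ : n - i < 2 * (i + 1)) :
    ¬ n.choose i ∣ n.choose (i + 1) := by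
  rintro ⟨u, hu⟩
  have hpos : 0 < n.choose i := Nat.choose_pos (by omega)
  have hu' : u * (i + 1) = n - i := by
    have := Nat.choose_succ_right_eq n i
    rw [hu, mul_assoc] at this
    exact Nat.eq_of_mul_eq_mul_left hpos this
  rcases u with _ | _ | u
  · omega
  · omega
  · nlinarith

/-- If a subgroup `M` of `Sym({1,...,2k})` fixes `1` and is `(k-1)`-homogeneous on
`{2,...,2k}` (acts transitively on its `(k-1)`-element subsets), and `|M| = (1/2)·C(2k,k)`,
then `k ∈ {1,2,3}`. -/
theorem stmt19 (k : ℕ) (M : Subgroup (Equiv.Perm ℕ))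
    (hsupp : ∀ σ ∈ M, ∀ x ∉ Finset.Icc 1 (2*k), σ x = x)
    (hfix : ∀ σ ∈ M, σ 1 = 1)
    (htrans : ∀ A B : Finset ℕ, A ⊆ Finset.Icc 2 (2*k) → B ⊆ Finset.Icc 2 (2*k) →
      A.card = k - 1 → B.card = k - 1 → ∃ σ ∈ M, A.image σ = B)
    (hcard : 2 * Nat.card ↥M = Nat.choose (2*k) k) :
    k = 1 ∨ k = 2 ∨ k = 3 := by
  by_contra hk
  obtain ⟨m, rfl⟩ : ∃ m, k = m + 4 := ⟨k - 4, by
    rcases k with _ | k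
    · simp at hcard
    · omega⟩
  set Ω := Finset.Icc 2 (2 * (m + 4))
  have hΩcard : #Ω = 2 * m + 7 := by simp only [Ω, Nat.card_Icc]; omega
  have hΩ : ∀ σ : M, ∀ x ∈ Ω, σ • x ∈ Ω := by
    rintro ⟨σ, hσ⟩ x hx
    refine Equiv.Perm.apply_mem_of_forall_notMem (s := (Ω : Set ℕ)) (fun y hy => ?_) hx
    rcases eq_or_ne y 1 with rfl | hy1
    · exact hfix σ hσ
    · refine hsupp σ hσ y fun hy' => hy ?_
      simp only [Ω, Finset.mem_coe, Finset.mem_Icc] at hy' ⊢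
      omega
  have hhom : IsHomogeneousOn M Ω (m + 3) := by
    intro A hA B hB
    rw [mem_powersetCard] at hA hB
    obtain ⟨σ, hσ, hAB⟩ := htrans A B hA.1 hB.1 (by omega) (by omega)
    exact ⟨⟨σ, hσ⟩, hAB⟩
  have hdvd := (hhom.of_succ (j := m + 1) (by omega)).card_powersetCard_dvd hΩ (by omega)
  have hM : Nat.card M = (2 * m + 7).choose (m + 3) := by
    have hhalf := Nat.choose_symm_half (m + 3)
    rw [show 2 * (m + 4) = 2 * (m + 3) + 1 + 1 by ring, Nat.choose_succ_succ, hhalf] at hcard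
    rw [show 2 * m + 7 = 2 * (m + 3) + 1 by ring]
    omega
  rw [card_powersetCard, hΩcard, hM] at hdvd
  exact not_choose_dvd_choose_succ (by omega) (by omega) hdvd
end
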